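/- arXiv:1911.01260 — 2 statements merged into one kernel-verified Lean document; each statement's English description precedes it below -/
import Mathlib

section
/- Let $X$ and $Y$ be metric spaces with all distances between distinct points in $[1/2,1]$, and suppose both satisfy all one-point extension properties: for every $\epsilon > 0$, every finite tuple in the space approximately realizing a finite configuration from the class $\mathcal C$ can be extended to approximately realize any one-point extension of that configuration, with error $\epsilon$. Then for every $n \in \mathbb N$ and $\epsilon > 0$, player II has a winning strategy in the $n$-round Ehrenfeucht–Fraïssé game $\mathfrak G(X,Y,n,\epsilon)$, where player II wins if the chosen points satisfy $|d_X(a_i,a_j) - d_Y(b_i,b_j)| < \epsilon$ for all $i < j$. -/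
/-- A configuration from the class `𝒞`: a finite metric space on `m` points with all
distances between distinct points in `[1/2,1]`. -/
def IsCConfig (m : ℕ) (dX : Fin m → Fin m → ℝ) : Prop :=
  (∀ i j, dX i j = dX j i) ∧ (∀ i, dX i i = 0) ∧
    ∀ i j, i ≠ j → dX i j ∈ Set.Icc (1/2 : ℝ) 1

/-- The one-point extension property of a metric space `Z` (with error doubling):
for every configuration `X₀` from `𝒞`, every one-point extension `Y₀ = X₀ ∪ {y}` in `𝒞`
(given by the distances `dy i` from the new point), every `ε > 0`, and every tuple in `Z`
realizing `X₀` up to error `ε`, some point of `Z` extends it to a realization of `Y₀`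
up to error `2ε`. -/
def ExtensionProperty (Z : Type*) [MetricSpace Z] : Prop :=
  ∀ (m : ℕ) (dX : Fin m → Fin m → ℝ) (dy : Fin m → ℝ),
    IsCConfig m dX → (∀ i, dy i ∈ Set.Icc (1/2 : ℝ) 1) →
    ∀ ε : ℝ, 0 < ε → ∀ z : Fin m → Z,
      (∀ i j, i ≠ j → |dist (z i) (z j) - dX i j| < ε) →
      ∃ w : Z, (∀ i, |dist (z i) w - dy i| < 2 * ε) ∧
        (∀ i j, i ≠ j → |dist (z i) (z j) - dX i j| < 2 * ε)

/-- The set of histories (lists of pairs, most recent first) reachable in `n` rounds of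
the Ehrenfeucht–Fraïssé game when player II plays according to the strategy
`(σX, σY)`: in each round player I picks a point of `X` (answered by `σX`) or a point
of `Y` (answered by `σY`). -/
def efPlays {X Y : Type*} (σX : List (X × Y) → X → Y) (σY : List (X × Y) → Y → X) :
    ℕ → Set (List (X × Y))
  | 0 => {[]}
  | n + 1 => {h' | ∃ h ∈ efPlays σX σY n,
      (∃ a : X, h' = (a, σX h a) :: h) ∨ (∃ b : Y, h' = (σY h b, b) :: h)}

/-- Player II has a winning strategy in the `n`-round game `𝔊(X,Y,n,ε)`: a strategy all
of whose complete plays produce tuples with `|d_X(a_i,a_j) - d_Y(b_i,b_j)| < ε`. -/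
def IIWins (X Y : Type*) [MetricSpace X] [MetricSpace Y] (n : ℕ) (ε : ℝ) : Prop :=
  ∃ (σX : List (X × Y) → X → Y) (σY : List (X × Y) → Y → X),
    ∀ h ∈ efPlays σX σY n, ∀ p ∈ h, ∀ q ∈ h,
      |dist p.1 q.1 - dist p.2 q.2| < ε

/-!
Player II keeps the invariant that the pairs played so far form a `δ`-approximate isometry
between the chosen points of `X` and of `Y`. If player I repeats a point, II repeats its
partner. Otherwise II removes duplicated points, so that the points chosen in `X` form a
configuration from `𝒞`, and applies the extension property of the other space: this costs a
factor `2` on the error, and putting the duplicates back costs one more `δ` by the triangle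
inequality. Starting from `δ = ε / 3ⁿ`, the error stays below `ε` for `n` rounds.
-/

section ApproxIsometry

variable {X Y : Type*} [MetricSpace X] [MetricSpace Y]

def IsApproxIsometry (δ : ℝ) (l : List (X × Y)) : Prop :=
  ∀ p ∈ l, ∀ q ∈ l, |dist p.1 q.1 - dist p.2 q.2| < δ

theorem isApproxIsometry_nil (δ : ℝ) : IsApproxIsometry δ ([] : List (X × Y)) := by
  simp [IsApproxIsometry]

theorem IsApproxIsometry.mono {δ δ' : ℝ} {l : List (X × Y)} (hl : IsApproxIsometry δ l)
    (hδ : δ ≤ δ') : IsApproxIsometry δ' l :=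
  fun p hp q hq => (hl p hp q hq).trans_le hδ

theorem isApproxIsometry_map_swap {δ : ℝ} {l : List (X × Y)} :
    IsApproxIsometry δ (l.map Prod.swap) ↔ IsApproxIsometry δ l := by
  simp only [IsApproxIsometry, List.forall_mem_map, Prod.fst_swap, Prod.snd_swap]
  exact forall₂_congr fun p _ => forall₂_congr fun q _ => by rw [abs_sub_comm]

theorem isApproxIsometry_cons {δ : ℝ} (hδ : 0 < δ) {l : List (X × Y)}
    (hl : IsApproxIsometry δ l) {a : X} {b : Y}
    (hab : ∀ p ∈ l, |dist a p.1 - dist b p.2| < δ) :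
    IsApproxIsometry δ ((a, b) :: l) := by
  intro p hp q hq
  rcases List.mem_cons.mp hp with rfl | hp <;> rcases List.mem_cons.mp hq with rfl | hq
  · simpa using hδ
  · exact hab q hq
  · simpa only [dist_comm] using hab p hp
  · exact hl p hp q hq

end ApproxIsometry

open scoped Classical in
theorem exists_mem_pwFilter_fst_eq {X Y : Type*} {l : List (X × Y)} {p : X × Y} (hp : p ∈ l) :
    ∃ q ∈ l.pwFilter (fun q r => q.1 ≠ r.1), q.1 = p.1 := by
  by_contra! h
  have hneg_trans : ∀ {q r s : X × Y}, q.1 ≠ s.1 → q.1 ≠ r.1 ∨ r.1 ≠ s.1 := by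
    intro q r s hqs
    by_contra! h'
    exact hqs (h'.1.trans h'.2)
  exact (List.forall_mem_pwFilter (R := fun q r : X × Y => q.1 ≠ r.1) hneg_trans p l).mp
    (fun q hq => (h q hq).symm) p hp rfl

section Extension

variable {X Y : Type*} [MetricSpace X] [MetricSpace Y]

theorem ExtensionProperty.nonempty {Z : Type*} [MetricSpace Z] (hZ : ExtensionProperty Z) :
    Nonempty Z :=
  let ⟨w, _⟩ := hZ 0 (fun i _ => i.elim0) Fin.elim0
    ⟨fun i => i.elim0, fun i => i.elim0, fun i => i.elim0⟩ (fun i => i.elim0)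
    1 one_pos Fin.elim0 (fun i => i.elim0)
  ⟨w⟩

/-- The first coordinates of `l` form a configuration from `𝒞` because they are distinct points
of `X`. -/
theorem ExtensionProperty.exists_extension (hYext : ExtensionProperty Y)
    (hX : ∀ x x' : X, x ≠ x' → dist x x' ∈ Set.Icc (1/2 : ℝ) 1)
    {δ : ℝ} (hδ : 0 < δ) {l : List (X × Y)} (hnodup : (l.map Prod.fst).Nodup)
    (hl : IsApproxIsometry δ l) {a : X} (ha : a ∉ l.map Prod.fst) :
    ∃ w : Y, ∀ p ∈ l, |dist a p.1 - dist w p.2| < 2 * δ := by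
  have hinj : ∀ i j : Fin l.length, i ≠ j → l[i.1].1 ≠ l[j.1].1 := fun i j hij h =>
    hij <| Fin.ext <| (hnodup.getElem_inj_iff (hi := by simp) (hj := by simp)).mp (by simpa using h)
  obtain ⟨w, hw, -⟩ := hYext l.length (fun i j => dist l[i.1].1 l[j.1].1)
    (fun i => dist l[i.1].1 a)
    ⟨fun _ _ => dist_comm _ _, fun _ => dist_self _, fun i j hij => hX _ _ (hinj i j hij)⟩
    (fun i => hX _ _ fun h => ha (h ▸ List.mem_map_of_mem (List.getElem_mem _)))
    δ hδ (fun i => l[i.1].2)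
    (fun i j _ => by
      simpa only [abs_sub_comm] using hl _ (List.getElem_mem _) _ (List.getElem_mem _))
  refine ⟨w, fun p hp => ?_⟩
  obtain ⟨i, hi, rfl⟩ := List.getElem_of_mem hp
  simpa only [dist_comm, abs_sub_comm] using hw ⟨i, hi⟩

open scoped Classical in
theorem ExtensionProperty.exists_forth_step (hYext : ExtensionProperty Y)
    (hX : ∀ x x' : X, x ≠ x' → dist x x' ∈ Set.Icc (1/2 : ℝ) 1)
    {δ : ℝ} (hδ : 0 < δ) {l : List (X × Y)} (hl : IsApproxIsometry δ l) (a : X) :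
    ∃ b : Y, IsApproxIsometry (3 * δ) ((a, b) :: l) := by
  have h3δ : 0 < 3 * δ := by positivity
  by_cases ha : a ∈ l.map Prod.fst
  · obtain ⟨p, hp, rfl⟩ := List.mem_map.mp ha
    exact ⟨p.2, isApproxIsometry_cons h3δ (hl.mono (by linarith))
      fun q hq => (hl p hp q hq).trans_le (by linarith)⟩
  set l' := l.pwFilter (fun q r => q.1 ≠ r.1)
  have hnodup : (l'.map Prod.fst).Nodup := List.pairwise_map.mpr (List.pairwise_pwFilter l)
  have hsub : l' ⊆ l := List.pwFilter_subset l
  obtain ⟨w, hw⟩ := hYext.exists_extension hX hδ hnodup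
    (fun p hp q hq => hl p (hsub hp) q (hsub hq))
    (fun h => ha (List.map_subset _ hsub h))
  refine ⟨w, isApproxIsometry_cons h3δ (hl.mono (by linarith)) fun p hp => ?_⟩
  obtain ⟨q, hq, hqp⟩ := exists_mem_pwFilter_fst_eq hp
  have hdist : dist q.2 p.2 < δ := by
    simpa [hqp] using hl q (hsub hq) p hp
  calc |dist a p.1 - dist w p.2|
      ≤ |dist a q.1 - dist w q.2| + |dist w q.2 - dist w p.2| := by
        rw [hqp]; exact abs_sub_le _ _ _
    _ ≤ |dist a q.1 - dist w q.2| + dist q.2 p.2 := by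
        gcongr
        simpa only [dist_comm w] using abs_dist_sub_le q.2 p.2 w
    _ < 2 * δ + δ := add_lt_add (hw q hq) hdist
    _ = 3 * δ := by ring

theorem ExtensionProperty.exists_back_step (hXext : ExtensionProperty X)
    (hY : ∀ y y' : Y, y ≠ y' → dist y y' ∈ Set.Icc (1/2 : ℝ) 1)
    {δ : ℝ} (hδ : 0 < δ) {l : List (X × Y)} (hl : IsApproxIsometry δ l) (b : Y) :
    ∃ a : X, IsApproxIsometry (3 * δ) ((a, b) :: l) := by
  obtain ⟨a, ha⟩ := hXext.exists_forth_step hY hδ (isApproxIsometry_map_swap.mpr hl) b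
  exact ⟨a, isApproxIsometry_map_swap.mp ha⟩

end Extension

theorem exists_imp_of_imp_exists {α : Sort*} [Nonempty α] {p : Prop} {q : α → Prop}
    (h : p → ∃ a, q a) : ∃ a, p → q a := by
  by_cases hp : p
  · exact (h hp).imp fun _ ha _ => ha
  · exact ⟨Classical.arbitrary α, fun hp' => absurd hp' hp⟩

theorem iiWins_of_forth_back {X Y : Type*} [MetricSpace X] [MetricSpace Y]
    [Nonempty X] [Nonempty Y] (c : ℕ → ℝ)
    (forth : ∀ k (l : List (X × Y)), IsApproxIsometry (c k) l →
      ∀ a, ∃ b, IsApproxIsometry (c (k + 1)) ((a, b) :: l))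
    (back : ∀ k (l : List (X × Y)), IsApproxIsometry (c k) l →
      ∀ b, ∃ a, IsApproxIsometry (c (k + 1)) ((a, b) :: l))
    (n : ℕ) : IIWins X Y n (c n) := by
  choose σX hσX using fun k l a => exists_imp_of_imp_exists fun hl => forth k l hl a
  choose σY hσY using fun k l b => exists_imp_of_imp_exists fun hl => back k l hl b
  refine ⟨fun l => σX l.length l, fun l => σY l.length l, fun l hl => ?_⟩
  suffices ∀ k, ∀ l ∈ efPlays (fun l => σX l.length l) (fun l => σY l.length l) k,
      l.length = k ∧ IsApproxIsometry (c k) l from (this n l hl).2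
  intro k
  induction k with
  | zero =>
    rintro l rfl
    exact ⟨rfl, isApproxIsometry_nil _⟩
  | succ k ih =>
    rintro _ ⟨l, hl, ⟨a, rfl⟩ | ⟨b, rfl⟩⟩ <;> obtain ⟨rfl, hlc⟩ := ih l hl
    · exact ⟨rfl, hσX _ l a hlc⟩
    · exact ⟨rfl, hσY _ l b hlc⟩

/-- If `X` and `Y` are metric spaces with all distances between distinct points in
`[1/2,1]` and both satisfy all one-point extension properties, then for every `n` and
`ε > 0`, player II has a winning strategy in `𝔊(X,Y,n,ε)`. -/
theorem stmt11 (X Y : Type*) [MetricSpace X] [MetricSpace Y]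
    (hX : ∀ x x' : X, x ≠ x' → dist x x' ∈ Set.Icc (1/2 : ℝ) 1)
    (hY : ∀ y y' : Y, y ≠ y' → dist y y' ∈ Set.Icc (1/2 : ℝ) 1)
    (hXext : ExtensionProperty X) (hYext : ExtensionProperty Y) :
    ∀ (n : ℕ) (ε : ℝ), 0 < ε → IIWins X Y n ε := by
  intro n ε hε
  have := hXext.nonempty
  have := hYext.nonempty
  set c : ℕ → ℝ := fun k => 3 ^ k * (ε / 3 ^ n)
  have hc : ∀ k, 0 < c k := fun k => by positivity
  have hc_succ : ∀ k, c (k + 1) = 3 * c k := fun k => by simp only [c, pow_succ]; ring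
  have hcn : c n = ε := by simp only [c]; field_simp
  rw [← hcn]
  refine iiWins_of_forth_back c (fun k l hl a => ?_) (fun k l hl b => ?_) n
  · simpa only [hc_succ] using hYext.exists_forth_step hX (hc k) hl a
  · simpa only [hc_succ] using hXext.exists_back_step hY (hc k) hl b
end

section
/- Every finite metric space $X_0 = \{a_1,\dots,a_n\}$ with distinct-point distances in $[1/2,1]$ embeds $\epsilon$-approximately into any metric space $Z$ (with distinct-point distances $\geq 1/2$) satisfying all extension properties: there exist $b_1,\dots,b_n \in Z$ with $\max_{i<j}|d_Z(b_i,b_j) - d_{X_0}(a_i,a_j)| < \epsilon$. -/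

lemma aux13 (Z : Type*) [MetricSpace Z] (hZext : ExtensionProperty Z) :
    ∀ (m : ℕ) (dX : Fin m → Fin m → ℝ), IsCConfig m dX → ∀ δ : ℝ, 0 < δ →
      ∃ z : Fin m → Z, ∀ i j, i ≠ j → |dist (z i) (z j) - dX i j| < δ := by
  intro m
  induction m with
  | zero =>
    intro dX _ δ _
    exact ⟨Fin.elim0, fun i => i.elim0⟩
  | succ m ih =>
    intro dX hdX δ hδ
    set dX' : Fin m → Fin m → ℝ := fun i j => dX i.castSucc j.castSucc with hdX'def
    have hconf : IsCConfig m dX' := by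
      refine ⟨fun i j => hdX.1 _ _, fun i => hdX.2.1 _, fun i j hij => ?_⟩
      exact hdX.2.2 _ _ (fun h => hij (Fin.castSucc_injective m h))
    obtain ⟨z, hz⟩ := ih dX' hconf (δ/2) (by positivity)
    obtain ⟨w, hw1, hw2⟩ := hZext m dX' (fun i => dX i.castSucc (Fin.last m)) hconf
      (fun i => hdX.2.2 _ _ (Fin.castSucc_lt_last i).ne) (δ/2) (by positivity) z hz
    have h2 : 2 * (δ/2) = δ := by ring
    rw [h2] at hw1 hw2
    refine ⟨Fin.snoc z w, fun i j hij => ?_⟩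
    induction i using Fin.lastCases with
    | last =>
      induction j using Fin.lastCases with
      | last => exact absurd rfl hij
      | cast j' =>
        rw [dist_comm, hdX.1]
        simpa [Fin.snoc_castSucc, Fin.snoc_last] using hw1 j'
    | cast i' =>
      induction j using Fin.lastCases with
      | last => simpa [Fin.snoc_castSucc, Fin.snoc_last] using hw1 i'
      | cast j' =>
        have hne : i' ≠ j' := fun h => hij (by rw [h])
        simpa [Fin.snoc_castSucc] using hw2 i' j' hne

/-- Every finite metric space with distinct-point distances in `[1/2,1]` embeds
`ε`-approximately into any metric space `Z` with distinct-point distances at least `1/2`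
satisfying all one-point extension properties. -/
theorem stmt13 (Z : Type*) [MetricSpace Z]
    (hZ : ∀ z w : Z, z ≠ w → (1/2 : ℝ) ≤ dist z w)
    (hZext : ExtensionProperty Z)
    (n : ℕ) (dX : Fin n → Fin n → ℝ) (hdX : IsCConfig n dX)
    (ε : ℝ) (hε : 0 < ε) :
    ∃ b : Fin n → Z, ∀ i j, i < j → |dist (b i) (b j) - dX i j| < ε := by
  obtain ⟨z, hz⟩ := aux13 Z hZext n dX hdX ε hε
  exact ⟨z, fun i j hij => hz i j hij.ne⟩
end
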